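/- arXiv:1710.06906 — 4 statements merged into one kernel-verified Lean document; each statement's English description precedes it below -/
import Mathlib

section
/- Fix m \ge 0. For n \ge m let I(n,m) = (1/\pi) \int_{\mathbb{C}} (1/|z|^2) \cdot (r_1^2 + r_2^2 - 2 r_{12}^2) / (r_3^2 \sqrt{(r_1+r_2)^2 - 4 r_{12}^2}) \, dA(z), where r_1, r_2, r_3, r_{12} are evaluated at x = |z|^2. Then I(n,m)/n \to 1 as n \to \infty. -/
open Filter

/-- `aa k x = ∑_{j=0}^k x^j / j!` -/
noncomputable def aa (k : ℕ) (x : ℝ) : ℝ := ∑ j ∈ Finset.range (k + 1), x ^ j / (Nat.factorial j)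

/-- `bb k x = ∑_{j=1}^k j x^j / j!` -/
noncomputable def bb (k : ℕ) (x : ℝ) : ℝ := ∑ j ∈ Finset.Icc 1 k, (j : ℝ) * x ^ j / (Nat.factorial j)

/-- `cc k x = ∑_{j=1}^k j² x^j / j!` -/
noncomputable def cc (k : ℕ) (x : ℝ) : ℝ := ∑ j ∈ Finset.Icc 1 k, (j : ℝ) ^ 2 * x ^ j / (Nat.factorial j)

noncomputable def r3 (n m : ℕ) (x : ℝ) : ℝ := aa n x + aa m x
noncomputable def r12 (n m : ℕ) (x : ℝ) : ℝ := bb n x * bb m x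
noncomputable def r1 (n m : ℕ) (x : ℝ) : ℝ := r3 n m x * cc n x - (bb n x) ^ 2
noncomputable def r2 (n m : ℕ) (x : ℝ) : ℝ := r3 n m x * cc m x - (bb m x) ^ 2

/-- The first-intensity (Kac–Rice) integrand of a Weyl random harmonic polynomial of
bidegree `(n, m)`, evaluated at `z`, with `x = |z|²`. -/
noncomputable def F (n m : ℕ) (z : ℂ) : ℝ :=
  (1 / ‖z‖ ^ 2) *
    (((r1 n m (‖z‖ ^ 2)) ^ 2 + (r2 n m (‖z‖ ^ 2)) ^ 2 - 2 * (r12 n m (‖z‖ ^ 2)) ^ 2) /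
      ((r3 n m (‖z‖ ^ 2)) ^ 2 *
        Real.sqrt ((r1 n m (‖z‖ ^ 2) + r2 n m (‖z‖ ^ 2)) ^ 2 - 4 * (r12 n m (‖z‖ ^ 2)) ^ 2)))

/-- The expected number of zeros in `ℂ`, as given by the Kac–Rice formula. -/
noncomputable def I (n m : ℕ) : ℝ := (1 / Real.pi) * ∫ z : ℂ, F n m z

/-!
With `x = |z|²` the integrand is radial, so `I(n,m) = ∫₀^∞ g(x) dx` with
`g = K(r₁, r₂, r₁₂) / (x r₃²)` and `K(a,b,c) = (a² + b² - 2c²) / √((a+b)² - 4c²)`.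
Cauchy–Schwarz gives `r₁₂² ≤ r₁ r₂`, and then `a - b - 2c ≤ K(a,b,c) ≤ a + b`.
The main term `(r₁ + r₂ - 2 r₁₂) / (x r₃²)` is the derivative of `(bₙ + bₘ) / r₃`, which
increases from `0` to `n`, so it integrates to exactly `n`. The two error terms are bounded by
`2 (m + 1) aₘ / aₘ₊₂`, which is integrable and independent of `n ≥ m + 2`.
Hence `I(n,m) - n` stays bounded.
-/

open Nat Real MeasureTheory Set Topology

lemma aa_succ (k : ℕ) (x : ℝ) : aa (k + 1) x = aa k x + x ^ (k + 1) / (k + 1)! :=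
  Finset.sum_range_succ _ _

lemma bb_succ (k : ℕ) (x : ℝ) : bb (k + 1) x = bb k x + (k + 1) * x ^ (k + 1) / (k + 1)! := by
  rw [bb, Finset.sum_Icc_succ_top (by omega)]; push_cast; rfl

lemma cc_succ (k : ℕ) (x : ℝ) :
    cc (k + 1) x = cc k x + (k + 1) ^ 2 * x ^ (k + 1) / (k + 1)! := by
  rw [cc, Finset.sum_Icc_succ_top (by omega)]; push_cast; rfl

@[simp] lemma aa_zero (x : ℝ) : aa 0 x = 1 := by simp [aa]
@[simp] lemma bb_zero (x : ℝ) : bb 0 x = 0 := by simp [bb]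
@[simp] lemma cc_zero (x : ℝ) : cc 0 x = 0 := by simp [cc]

lemma bb_succ_eq_mul_aa (k : ℕ) (x : ℝ) : bb (k + 1) x = x * aa k x := by
  induction k with
  | zero => simp [bb_succ]
  | succ k ih =>
    rw [bb_succ, ih, aa_succ, Nat.factorial_succ (k + 1)]
    push_cast
    field_simp
    ring

lemma cc_succ_eq_mul (k : ℕ) (x : ℝ) : cc (k + 1) x = x * (aa k x + bb k x) := by
  induction k with
  | zero => simp [cc_succ]
  | succ k ih =>
    rw [cc_succ, ih, aa_succ, bb_succ, Nat.factorial_succ (k + 1)]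
    push_cast
    field_simp
    ring

lemma aa_le_aa_succ (k : ℕ) {x : ℝ} (hx : 0 ≤ x) : aa k x ≤ aa (k + 1) x := by
  rw [aa_succ]; have : 0 ≤ x ^ (k + 1) / (k + 1)! := by positivity
  linarith

lemma aa_mono {k l : ℕ} (hkl : k ≤ l) {x : ℝ} (hx : 0 ≤ x) : aa k x ≤ aa l x :=
  monotone_nat_of_le_succ (fun k => aa_le_aa_succ k hx) hkl

lemma one_le_aa (k : ℕ) {x : ℝ} (hx : 0 ≤ x) : 1 ≤ aa k x := by
  simpa using aa_mono (Nat.zero_le k) hx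

lemma aa_pos (k : ℕ) {x : ℝ} (hx : 0 ≤ x) : 0 < aa k x :=
  zero_lt_one.trans_le (one_le_aa k hx)

lemma bb_nonneg (k : ℕ) {x : ℝ} (hx : 0 ≤ x) : 0 ≤ bb k x := by
  unfold bb; positivity

lemma cc_nonneg (k : ℕ) {x : ℝ} (hx : 0 ≤ x) : 0 ≤ cc k x := by
  unfold cc; positivity

lemma bb_le_mul_aa (k : ℕ) {x : ℝ} (hx : 0 ≤ x) : bb k x ≤ k * aa k x := by
  induction k with
  | zero => simp
  | succ k ih =>
    rw [bb_succ, aa_succ]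
    have := one_le_aa k hx
    have : 0 ≤ x ^ (k + 1) / (k + 1)! := by positivity
    push_cast
    rw [mul_div_assoc]
    nlinarith

lemma bb_le_self_mul_aa (k : ℕ) {x : ℝ} (hx : 0 ≤ x) : bb k x ≤ x * aa k x := by
  cases k with
  | zero => simp [hx]
  | succ k => rw [bb_succ_eq_mul_aa]; exact mul_le_mul_of_nonneg_left (aa_le_aa_succ k hx) hx

lemma bb_apply_zero (k : ℕ) : bb k 0 = 0 :=
  le_antisymm (by simpa using bb_le_self_mul_aa k le_rfl) (bb_nonneg k le_rfl)

lemma cc_le_mul_aa (k : ℕ) {x : ℝ} (hx : 0 ≤ x) : cc k x ≤ (k + 1) * x * aa k x := by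
  cases k with
  | zero => simp; positivity
  | succ k =>
    rw [cc_succ_eq_mul]
    have hab : aa k x + bb k x ≤ (k + 1 + 1) * aa (k + 1) x := by
      have := bb_le_mul_aa k hx
      have := aa_le_aa_succ k hx
      have := one_le_aa k hx
      nlinarith
    push_cast
    rw [mul_comm _ x, mul_assoc]
    exact mul_le_mul_of_nonneg_left hab hx

lemma mul_aa_le_mul_aa_succ (k : ℕ) {x : ℝ} (hx : 0 ≤ x) :
    x * aa k x ≤ (k + 1) * aa (k + 1) x := by
  induction k with
  | zero => simp [aa_succ]
  | succ k ih =>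
    have hterm : x * (x ^ (k + 1) / (k + 1)!) = (k + 1 + 1) * (x ^ (k + 1 + 1) / (k + 1 + 1)!) := by
      rw [Nat.factorial_succ (k + 1)]; push_cast; field_simp; ring
    have := one_le_aa (k + 1) hx
    push_cast at ih ⊢
    calc x * aa (k + 1) x = x * aa k x + x * (x ^ (k + 1) / (k + 1)!) := by rw [aa_succ, mul_add]
      _ ≤ (k + 1 + 1) * aa (k + 1) x + (k + 1 + 1) * (x ^ (k + 1 + 1) / (k + 1 + 1)!) := by
        rw [hterm]; linarith
      _ = (k + 1 + 1) * aa (k + 1 + 1) x := by rw [aa_succ (k + 1)]; ring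

lemma sq_bb_le_aa_mul_cc (k : ℕ) {x : ℝ} (hx : 0 ≤ x) : bb k x ^ 2 ≤ aa k x * cc k x := by
  have cs := Finset.sum_sq_le_sum_mul_sum_of_sq_le_mul (Finset.Icc 1 k)
    (r := fun j => (j : ℝ) * x ^ j / j !) (f := fun j => x ^ j / j !)
    (g := fun j => (j : ℝ) ^ 2 * x ^ j / j !) (fun j _ => by positivity)
    (fun j _ => by positivity) (fun j _ => by field_simp; rfl)
  refine cs.trans (mul_le_mul_of_nonneg_right ?_ (cc_nonneg k hx))
  exact Finset.sum_le_sum_of_subset_of_nonneg (fun j hj => by simp at hj ⊢; omega)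
    (fun j _ _ => by positivity)

lemma continuous_aa (k : ℕ) : Continuous (aa k) := by unfold aa; fun_prop
lemma continuous_bb (k : ℕ) : Continuous (bb k) := by unfold bb; fun_prop
lemma continuous_cc (k : ℕ) : Continuous (cc k) := by unfold cc; fun_prop

lemma hasDerivAt_sum_mul_pow (s : Finset ℕ) (c : ℕ → ℝ) {x : ℝ} (hx : x ≠ 0) :
    HasDerivAt (fun y => ∑ j ∈ s, c j * y ^ j) ((∑ j ∈ s, j * c j * x ^ j) / x) x := by
  rw [Finset.sum_div]
  refine HasDerivAt.fun_sum fun j _ => ?_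
  have hpow : (j : ℝ) * x ^ (j - 1) = j * x ^ j / x := by
    rcases j with _ | j
    · simp
    · rw [pow_succ]; field_simp; simp
  have h := (hasDerivAt_pow j x).const_mul (c j)
  rwa [hpow, mul_div_assoc', ← mul_assoc, mul_comm (c j)] at h

lemma hasDerivAt_aa (k : ℕ) {x : ℝ} (hx : x ≠ 0) : HasDerivAt (aa k) (bb k x / x) x := by
  have h := hasDerivAt_sum_mul_pow (Finset.range (k + 1)) (fun j => (j ! : ℝ)⁻¹) hx
  convert h using 1
  · ext y; simp only [aa, div_eq_inv_mul]
  · congr 1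
    rw [Finset.range_eq_Ico, Finset.sum_eq_sum_Ico_succ_bot (by omega),
      Finset.Ico_add_one_right_eq_Icc, bb]
    simp only [CharP.cast_eq_zero, zero_mul, zero_add]
    congr 1; ext j; ring

lemma hasDerivAt_bb (k : ℕ) {x : ℝ} (hx : x ≠ 0) : HasDerivAt (bb k) (cc k x / x) x := by
  have h := hasDerivAt_sum_mul_pow (Finset.Icc 1 k) (fun j => (j : ℝ) / j !) hx
  convert h using 1
  · ext y; simp only [bb]; congr 1; ext j; ring
  · simp only [cc]; congr 1; congr 1; ext j; ring

noncomputable def kacRiceRatio (a b c : ℝ) : ℝ :=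
  (a ^ 2 + b ^ 2 - 2 * c ^ 2) / √((a + b) ^ 2 - 4 * c ^ 2)

section KacRiceRatio

variable {a b c : ℝ}

lemma kacRiceRatio_le_add (ha : 0 ≤ a) (hb : 0 ≤ b) (hcab : c ^ 2 ≤ a * b) :
    kacRiceRatio a b c ≤ a + b := by
  set S := √((a + b) ^ 2 - 4 * c ^ 2)
  have hSS : S * S = (a + b) ^ 2 - 4 * c ^ 2 :=
    Real.mul_self_sqrt (by nlinarith [sq_nonneg (a - b)])
  have hS : S ≤ a + b := Real.sqrt_le_iff.2 ⟨by positivity, by nlinarith⟩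
  rcases (Real.sqrt_nonneg _).eq_or_lt with hS0 | hS0
  · rw [kacRiceRatio, ← hS0, div_zero]; positivity
  -- `a² + b² - 2c² = S² - 2(ab - c²) ≤ S² ≤ (a + b) S`
  · rw [kacRiceRatio, div_le_iff₀ hS0]
    nlinarith

lemma sub_le_kacRiceRatio (hb : 0 ≤ b) (hc : 0 ≤ c) (hcab : c ^ 2 ≤ a * b) :
    a - b - 2 * c ≤ kacRiceRatio a b c := by
  have hN : 0 ≤ a ^ 2 + b ^ 2 - 2 * c ^ 2 := by nlinarith [sq_nonneg (a - b)]
  rcases le_or_gt (a - b - 2 * c) 0 with ht | ht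
  · exact ht.trans (div_nonneg hN (Real.sqrt_nonneg _))
  -- `S² = (a + b - 2c)(a + b + 2c)` and `a + b - 2c > 0`, so `0 < S ≤ a + b + 2c`.
  have hS0 : 0 < √((a + b) ^ 2 - 4 * c ^ 2) := Real.sqrt_pos.2 (by nlinarith)
  have hS : √((a + b) ^ 2 - 4 * c ^ 2) ≤ a + b + 2 * c :=
    Real.sqrt_le_iff.2 ⟨by linarith, by nlinarith⟩
  rw [kacRiceRatio, le_div_iff₀ hS0]
  nlinarith [mul_le_mul_of_nonneg_left hS ht.le, sq_nonneg (b + c)]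

end KacRiceRatio

noncomputable def radialIntegrand (n m : ℕ) (x : ℝ) : ℝ :=
  kacRiceRatio (r1 n m x) (r2 n m x) (r12 n m x) / (x * r3 n m x ^ 2)

lemma F_eq_radialIntegrand (n m : ℕ) (z : ℂ) : F n m z = radialIntegrand n m (‖z‖ ^ 2) := by
  unfold F radialIntegrand kacRiceRatio; ring

noncomputable def leadingTerm (n m : ℕ) (x : ℝ) : ℝ :=
  (r1 n m x + r2 n m x - 2 * r12 n m x) / (x * r3 n m x ^ 2)

noncomputable def leadingPrimitive (n m : ℕ) (x : ℝ) : ℝ := (bb n x + bb m x) / r3 n m x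

noncomputable def tailRatio (m : ℕ) (x : ℝ) : ℝ := aa m x / aa (m + 2) x

section WeylIntensity

variable (n m : ℕ) {x : ℝ}

lemma r3_pos (hx : 0 ≤ x) : 0 < r3 n m x := add_pos (aa_pos n hx) (aa_pos m hx)

lemma aa_mul_cc_le_r1 (hx : 0 ≤ x) : aa m x * cc n x ≤ r1 n m x := by
  have := sq_bb_le_aa_mul_cc n hx; unfold r1 r3; linarith

lemma aa_mul_cc_le_r2 (hx : 0 ≤ x) : aa n x * cc m x ≤ r2 n m x := by
  have := sq_bb_le_aa_mul_cc m hx; unfold r2 r3; linarith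

lemma r1_nonneg (hx : 0 ≤ x) : 0 ≤ r1 n m x :=
  (mul_nonneg (aa_pos m hx).le (cc_nonneg n hx)).trans (aa_mul_cc_le_r1 n m hx)

lemma r2_nonneg (hx : 0 ≤ x) : 0 ≤ r2 n m x :=
  (mul_nonneg (aa_pos n hx).le (cc_nonneg m hx)).trans (aa_mul_cc_le_r2 n m hx)

lemma r12_nonneg (hx : 0 ≤ x) : 0 ≤ r12 n m x := mul_nonneg (bb_nonneg n hx) (bb_nonneg m hx)

lemma sq_r12_le_r1_mul_r2 (hx : 0 ≤ x) : r12 n m x ^ 2 ≤ r1 n m x * r2 n m x :=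
  calc r12 n m x ^ 2 = bb n x ^ 2 * bb m x ^ 2 := mul_pow _ _ _
    _ ≤ (aa n x * cc n x) * (aa m x * cc m x) :=
      mul_le_mul (sq_bb_le_aa_mul_cc n hx) (sq_bb_le_aa_mul_cc m hx) (sq_nonneg _)
        (mul_nonneg (aa_pos n hx).le (cc_nonneg n hx))
    _ = (aa m x * cc n x) * (aa n x * cc m x) := by ring
    _ ≤ r1 n m x * r2 n m x :=
      mul_le_mul (aa_mul_cc_le_r1 n m hx) (aa_mul_cc_le_r2 n m hx)
        (mul_nonneg (aa_pos n hx).le (cc_nonneg m hx)) (r1_nonneg n m hx)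

lemma r12_le (hx : 0 ≤ x) : r12 n m x ≤ (m + 1) * x * aa m x * r3 n m x := by
  have hn : bb n x ≤ x * r3 n m x := by
    have := bb_le_self_mul_aa n hx; have := aa_pos m hx
    unfold r3; nlinarith
  have hm : bb m x ≤ (m + 1) * aa m x := by
    have := bb_le_mul_aa m hx; have := aa_pos m hx; linarith
  calc r12 n m x = bb n x * bb m x := rfl
    _ ≤ x * r3 n m x * ((m + 1) * aa m x) :=
      mul_le_mul hn hm (bb_nonneg m hx) (mul_nonneg hx (r3_pos n m hx).le)
    _ = _ := by ring

lemma r2_le (hx : 0 ≤ x) : r2 n m x ≤ (m + 1) * x * aa m x * r3 n m x :=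
  calc r2 n m x ≤ r3 n m x * cc m x := by unfold r2; nlinarith [sq_nonneg (bb m x)]
    _ ≤ r3 n m x * ((m + 1) * x * aa m x) :=
      mul_le_mul_of_nonneg_left (cc_le_mul_aa m hx) (r3_pos n m hx).le
    _ = _ := by ring

lemma abs_radialIntegrand_sub_leadingTerm_le (hnm : m + 2 ≤ n) (hx : 0 < x) :
    |radialIntegrand n m x - leadingTerm n m x| ≤ 2 * (m + 1) * tailRatio m x := by
  have hR := r3_pos n m hx.le
  have hcs := sq_r12_le_r1_mul_r2 n m hx.le
  have hK : |kacRiceRatio (r1 n m x) (r2 n m x) (r12 n m x) - (r1 n m x + r2 n m x - 2 * r12 n m x)|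
      ≤ 2 * ((m + 1) * x * aa m x * r3 n m x) := by
    have hup := kacRiceRatio_le_add (r1_nonneg n m hx.le) (r2_nonneg n m hx.le) hcs
    have hlo := sub_le_kacRiceRatio (r2_nonneg n m hx.le) (r12_nonneg n m hx.le) hcs
    have := r12_le n m hx.le; have := r2_le n m hx.le
    rw [abs_sub_le_iff]; constructor <;> linarith
  have hRm : aa (m + 2) x ≤ r3 n m x := by
    have := aa_mono hnm hx.le; have := aa_pos m hx.le; unfold r3; linarith
  calc |radialIntegrand n m x - leadingTerm n m x|
      = |kacRiceRatio (r1 n m x) (r2 n m x) (r12 n m x) - (r1 n m x + r2 n m x - 2 * r12 n m x)|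
        / (x * r3 n m x ^ 2) := by
        rw [radialIntegrand, leadingTerm, ← sub_div, abs_div,
          abs_of_pos (by positivity : 0 < x * r3 n m x ^ 2)]
    _ ≤ 2 * ((m + 1) * x * aa m x * r3 n m x) / (x * r3 n m x ^ 2) := by gcongr
    _ = 2 * (m + 1) * (aa m x / r3 n m x) := by field_simp
    _ ≤ 2 * (m + 1) * tailRatio m x := by
        unfold tailRatio
        gcongr
        · exact (aa_pos m hx.le).le
        · exact aa_pos _ hx.le

lemma hasDerivAt_leadingPrimitive (hx : 0 < x) :
    HasDerivAt (leadingPrimitive n m) (leadingTerm n m x) x := by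
  have hR := r3_pos n m hx.le
  have h := ((hasDerivAt_bb n hx.ne').add (hasDerivAt_bb m hx.ne')).div
    ((hasDerivAt_aa n hx.ne').add (hasDerivAt_aa m hx.ne')) hR.ne'
  refine (h : HasDerivAt (leadingPrimitive n m) _ x).congr_deriv ?_
  have hR' : aa n x + aa m x ≠ 0 := hR.ne'
  simp only [Pi.add_apply, leadingTerm, r1, r2, r12, r3]
  field_simp
  ring

lemma leadingTerm_nonneg (hx : 0 < x) : 0 ≤ leadingTerm n m x := by
  have := sq_r12_le_r1_mul_r2 n m hx.le
  have := r1_nonneg n m hx.le; have := r2_nonneg n m hx.le; have := r12_nonneg n m hx.le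
  have hR := r3_pos n m hx.le
  refine div_nonneg ?_ (by positivity)
  nlinarith [sq_nonneg (r1 n m x - r2 n m x)]

lemma leadingPrimitive_zero : leadingPrimitive n m 0 = 0 := by
  simp [leadingPrimitive, bb_apply_zero]

lemma continuousAt_leadingPrimitive_zero : ContinuousAt (leadingPrimitive n m) 0 :=
  ((continuous_bb n).add (continuous_bb m)).continuousAt.div
    ((continuous_aa n).add (continuous_aa m)).continuousAt (r3_pos n m le_rfl).ne'

lemma leadingPrimitive_le (hmn : m ≤ n) (hx : 0 ≤ x) : leadingPrimitive n m x ≤ n := by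
  have hR := r3_pos n m hx
  have := bb_le_mul_aa n hx; have := bb_le_mul_aa m hx; have := aa_pos m hx
  have : (m : ℝ) ≤ n := by exact_mod_cast hmn
  rw [leadingPrimitive, div_le_iff₀ hR, r3]
  nlinarith

lemma sub_le_leadingPrimitive (hmn : m < n) (hx : 0 < x) :
    n - 2 * n ^ 2 / x ≤ leadingPrimitive n m x := by
  obtain ⟨k, rfl⟩ : ∃ k, n = k + 1 := ⟨n - 1, by omega⟩
  have hR := r3_pos (k + 1) m hx.le
  -- the top-degree terms of `(k + 1) aₖ₊₁` and `bₖ₊₁` cancel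
  have hdeficit : (k + 1) * r3 (k + 1) m x - (bb (k + 1) x + bb m x) ≤ 2 * (k + 1) * aa k x := by
    have := bb_nonneg k hx.le; have := bb_nonneg m hx.le
    have := mul_le_mul_of_nonneg_left (aa_mono (Nat.le_of_lt_succ hmn) hx.le)
      (by positivity : (0 : ℝ) ≤ k + 1)
    rw [r3, aa_succ, bb_succ, mul_div_assoc]
    linarith
  have hratio : aa k x / r3 (k + 1) m x ≤ (k + 1) / x := by
    have := mul_aa_le_mul_aa_succ k hx.le; have := aa_pos m hx.le
    rw [div_le_div_iff₀ hR hx, r3]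
    nlinarith
  calc ((k + 1 : ℕ) : ℝ) - 2 * ((k + 1 : ℕ) : ℝ) ^ 2 / x
      = (k + 1) - 2 * (k + 1) * ((k + 1) / x) := by push_cast; ring
    _ ≤ (k + 1) - 2 * (k + 1) * (aa k x / r3 (k + 1) m x) := by gcongr
    _ = (k + 1) - 2 * (k + 1) * aa k x / r3 (k + 1) m x := by ring
    _ ≤ (k + 1) - ((k + 1) * r3 (k + 1) m x - (bb (k + 1) x + bb m x)) / r3 (k + 1) m x := by
        gcongr
    _ = leadingPrimitive (k + 1) m x := by rw [leadingPrimitive]; field_simp; ring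

lemma tendsto_leadingPrimitive (hmn : m < n) :
    Tendsto (leadingPrimitive n m) atTop (𝓝 (n : ℝ)) := by
  have hlow : Tendsto (fun x : ℝ => (n : ℝ) - 2 * n ^ 2 / x) atTop (𝓝 (n : ℝ)) := by
    simpa using (tendsto_const_nhds (x := (n : ℝ))).sub
      ((tendsto_const_nhds (x := 2 * (n : ℝ) ^ 2)).div_atTop tendsto_id)
  refine tendsto_of_tendsto_of_tendsto_of_le_of_le' hlow tendsto_const_nhds ?_ ?_
  · filter_upwards [eventually_gt_atTop 0] with x hx using sub_le_leadingPrimitive n m hmn hx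
  · filter_upwards [eventually_ge_atTop 0] with x hx using leadingPrimitive_le n m hmn.le hx

lemma integrableOn_leadingTerm (hmn : m < n) : IntegrableOn (leadingTerm n m) (Ioi 0) :=
  integrableOn_Ioi_deriv_of_nonneg (continuousAt_leadingPrimitive_zero n m).continuousWithinAt
    (fun _ hx => hasDerivAt_leadingPrimitive n m hx) (fun _ hx => leadingTerm_nonneg n m hx)
    (tendsto_leadingPrimitive n m hmn)

lemma integral_leadingTerm (hmn : m < n) : ∫ x in Ioi 0, leadingTerm n m x = n := by
  rw [integral_Ioi_of_hasDerivAt_of_nonneg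
    (continuousAt_leadingPrimitive_zero n m).continuousWithinAt
    (fun _ hx => hasDerivAt_leadingPrimitive n m hx) (fun _ hx => leadingTerm_nonneg n m hx)
    (tendsto_leadingPrimitive n m hmn), leadingPrimitive_zero, sub_zero]

lemma tailRatio_le (hx : 0 ≤ x) :
    tailRatio m x ≤ (1 + (m + 1) * (m + 2)) * (1 + x ^ 2)⁻¹ := by
  have hA := aa_pos (m + 2) hx
  have hle_one : aa m x ≤ aa (m + 2) x := aa_mono (by omega) hx
  have hsq : x ^ 2 * aa m x ≤ (m + 1) * (m + 2) * aa (m + 2) x := by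
    have h1 := mul_aa_le_mul_aa_succ m hx; have h2 := mul_aa_le_mul_aa_succ (m + 1) hx
    push_cast at h2
    nlinarith
  rw [tailRatio, le_mul_inv_iff₀ (by positivity), div_mul_eq_mul_div, div_le_iff₀ hA]
  nlinarith

lemma integrableOn_tailRatio : IntegrableOn (tailRatio m) (Ioi 0) := by
  refine ((integrable_inv_one_add_sq.const_mul (1 + ((m : ℝ) + 1) * (m + 2))).integrableOn).mono'
    ?_ ?_
  · exact ((continuous_aa m).measurable.div (continuous_aa (m + 2)).measurable).aestronglyMeasurable
  · refine (ae_restrict_iff' measurableSet_Ioi).2 (ae_of_all _ fun x hx => ?_)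
    have h0 : 0 ≤ tailRatio m x :=
      div_nonneg (aa_pos m (le_of_lt hx)).le (aa_pos _ (le_of_lt hx)).le
    rw [Real.norm_of_nonneg h0]
    exact tailRatio_le m (le_of_lt hx)

lemma measurable_radialIntegrand : Measurable (radialIntegrand n m) := by
  have := continuous_aa n; have := continuous_aa m; have := continuous_bb n
  have := continuous_bb m; have := continuous_cc n; have := continuous_cc m
  unfold radialIntegrand kacRiceRatio r1 r2 r3 r12
  fun_prop

lemma abs_integral_radialIntegrand_sub_le (hnm : m + 2 ≤ n) :
    |(∫ x in Ioi 0, radialIntegrand n m x) - n| ≤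
      2 * (m + 1) * ∫ x in Ioi 0, tailRatio m x := by
  have hlead := integrableOn_leadingTerm n m (by omega)
  have hbound : ∀ᵐ x ∂volume.restrict (Ioi 0),
      ‖radialIntegrand n m x - leadingTerm n m x‖ ≤ 2 * (m + 1) * tailRatio m x :=
    (ae_restrict_iff' measurableSet_Ioi).2
      (ae_of_all _ fun x hx => abs_radialIntegrand_sub_leadingTerm_le n m hnm hx)
  have hdiff : IntegrableOn (fun x => radialIntegrand n m x - leadingTerm n m x) (Ioi 0) :=
    ((integrableOn_tailRatio m).const_mul _).mono'
      ((measurable_radialIntegrand n m).aestronglyMeasurable.sub hlead.aestronglyMeasurable) hbound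
  have hrad : IntegrableOn (radialIntegrand n m) (Ioi 0) :=
    (hdiff.add hlead).congr_fun (fun x _ => sub_add_cancel _ _) measurableSet_Ioi
  rw [← integral_leadingTerm n m (by omega), ← integral_sub hrad hlead, ← integral_const_mul]
  exact norm_integral_le_of_norm_le ((integrableOn_tailRatio m).const_mul _) hbound

end WeylIntensity

lemma integral_comp_norm_sq_complex {E : Type*} [NormedAddCommGroup E] [NormedSpace ℝ E]
    (g : ℝ → E) : ∫ z : ℂ, g (‖z‖ ^ 2) = π • ∫ x in Ioi 0, g x := by
  have hpolar := integral_fun_norm_addHaar (volume : Measure ℂ) (fun r => g (r ^ 2))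
  have hball : volume.real (Metric.ball (0 : ℂ) 1) = π := by
    simp [measureReal_def, Complex.volume_ball]
  have hsubst := integral_comp_rpow_Ioi g (p := 2) two_ne_zero
  have hcongr : ∫ r in Ioi (0 : ℝ), (|(2 : ℝ)| * r ^ ((2 : ℝ) - 1)) • g (r ^ (2 : ℝ))
      = (2 : ℝ) • ∫ r in Ioi (0 : ℝ), r ^ (2 - 1) • g (r ^ 2) := by
    rw [← integral_smul]
    refine setIntegral_congr_fun measurableSet_Ioi fun r _ => ?_
    rw [Real.rpow_two, show (2 : ℝ) - 1 = 1 by norm_num, Real.rpow_one, abs_two, pow_one,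
      mul_smul]
  rw [hpolar, Complex.finrank_real_complex, hball, ← hsubst, hcongr]
  module

lemma I_eq_integral_radialIntegrand (n m : ℕ) :
    I n m = ∫ x in Ioi 0, radialIntegrand n m x := by
  simp only [I, F_eq_radialIntegrand, integral_comp_norm_sq_complex, smul_eq_mul]
  field_simp

lemma tendsto_div_natCast_of_abs_sub_le {f : ℕ → ℝ} {C : ℝ}
    (h : ∀ᶠ n in atTop, |f n - n| ≤ C) :
    Tendsto (fun n : ℕ => f n / n) atTop (𝓝 1) := by
  have hC : Tendsto (fun n : ℕ => C / (n : ℝ)) atTop (𝓝 0) :=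
    tendsto_const_div_atTop_nhds_zero_nat C
  rw [← tendsto_sub_nhds_zero_iff]
  refine squeeze_zero_norm' ?_ hC
  filter_upwards [h, eventually_gt_atTop 0] with n hn hn0
  have : (0 : ℝ) < n := by exact_mod_cast hn0
  rw [Real.norm_eq_abs, show f n / n - 1 = (f n - n) / n by field_simp, abs_div, Nat.abs_cast]
  gcongr

/-- For fixed `m`, the Kac–Rice integral `I(n,m)` for the Weyl model satisfies
`I(n,m)/n → 1` as `n → ∞`. -/
theorem weyl_intensity_fixed_m (m : ℕ) :
    Tendsto (fun n : ℕ => I n m / (n : ℝ)) atTop (nhds 1) := by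
  refine tendsto_div_natCast_of_abs_sub_le (C := 2 * (m + 1) * ∫ x in Ioi 0, tailRatio m x) ?_
  filter_upwards [eventually_ge_atTop (m + 2)] with n hn
  rw [I_eq_integral_radialIntegrand]
  exact abs_integral_radialIntegrand_sub_le n m hn
end

section
/- Fix \alpha \in (0,1] and a real t with t > \alpha. Let m(n) be a sequence of natural numbers such that m(n) - \alpha n is bounded. Then (m(n)! / (nt)^{m(n)}) \cdot \sum_{j=0}^{m(n)} (nt)^j/j! \to t/(t - \alpha) as n \to \infty. -/
/-!
Reversing the order of summation turns `m! / x^m * ∑_{j ≤ m} x^j / j!` into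
`∑_{k ≤ m} m(m-1)⋯(m-k+1) / x^k`. With `x = nt` and `m ≈ αn`, the `k`-th term tends to `(α/t)^k`
and is dominated by `q^k` for any fixed `q ∈ (α/t, 1)`, so by dominated convergence the sum tends
to `∑ (α/t)^k = t/(t-α)`.
-/

open Filter Topology Finset Nat

theorem factorial_div_pow_mul_sum_range_pow_div_factorial {K : Type*} [Field K] [CharZero K]
    {x : K} (hx : x ≠ 0) (m : ℕ) :
    (m ! / x ^ m) * ∑ j ∈ range (m + 1), x ^ j / j ! =
      ∑ k ∈ range (m + 1), (m.descFactorial k : K) / x ^ k := by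
  rw [mul_sum, ← sum_range_reflect]
  refine sum_congr rfl fun k hk => ?_
  have hkm : k ≤ m := Nat.lt_succ_iff.mp (mem_range.mp hk)
  have hpow : x ^ m = x ^ (m - k) * x ^ k := by rw [← pow_add, Nat.sub_add_cancel hkm]
  have hfac : ((m - k)! : K) ≠ 0 := Nat.cast_ne_zero.mpr (factorial_ne_zero _)
  rw [Nat.add_sub_cancel, hpow, ← factorial_mul_descFactorial hkm, Nat.cast_mul]
  field_simp

theorem tendsto_div_natCast_of_abs_sub_mul_le {u : ℕ → ℝ} {α C : ℝ}
    (hu : ∀ n, |u n - α * n| ≤ C) : Tendsto (fun n => u n / n) atTop (𝓝 α) := by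
  have herr : Tendsto (fun n : ℕ => (u n - α * n) / n) atTop (𝓝 0) := by
    refine squeeze_zero_norm (fun n => ?_)
      (tendsto_const_nhds.div_atTop tendsto_natCast_atTop_atTop : Tendsto (fun n : ℕ => C / n) _ _)
    rw [norm_div, Real.norm_eq_abs, Real.norm_natCast]
    exact div_le_div_of_nonneg_right (hu n) n.cast_nonneg
  have hlim := herr.const_add α
  rw [add_zero] at hlim
  refine hlim.congr' ?_
  filter_upwards [eventually_ne_atTop 0] with n hn
  field_simp
  ring

section DescFactorialSum

variable {ι : Type*} {l : Filter ι} {m : ι → ℕ} {x : ι → ℝ} {r : ℝ}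

theorem tendsto_descFactorial_div_pow (hx : Tendsto x l atTop)
    (hm : Tendsto (fun n => (m n : ℝ) / x n) l (𝓝 r)) (k : ℕ) :
    Tendsto (fun n => ((m n).descFactorial k : ℝ) / x n ^ k) l (𝓝 (r ^ k)) := by
  have hfactor (j : ℕ) : Tendsto (fun n => ((m n : ℝ) - j) / x n) l (𝓝 r) := by
    have := hm.sub (tendsto_const_nhds.div_atTop hx : Tendsto (fun n => (j : ℝ) / x n) l _)
    simpa only [sub_zero, sub_div] using this
  convert tendsto_finsetProd (range k) fun j _ => hfactor j using 2 with n
  · rw [← descPochhammer_eval_eq_descFactorial, descPochhammer_eval_eq_prod_range,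
      prod_div_distrib, prod_const, card_range]
  · rw [prod_const, card_range]

theorem eventually_descFactorial_div_pow_le (hx : Tendsto x l atTop)
    (hm : Tendsto (fun n => (m n : ℝ) / x n) l (𝓝 r)) {q : ℝ} (hrq : r < q) :
    ∀ᶠ n in l, ∀ k, ‖((m n).descFactorial k : ℝ) / x n ^ k‖ ≤ q ^ k := by
  filter_upwards [hx.eventually_gt_atTop 0, hm.eventually_le_const hrq] with n hx0 hmq k
  have hpow : ((m n).descFactorial k : ℝ) ≤ (m n : ℝ) ^ k := by
    exact_mod_cast (m n).descFactorial_le_pow k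
  calc ‖((m n).descFactorial k : ℝ) / x n ^ k‖
      = ((m n).descFactorial k : ℝ) / x n ^ k := by
        rw [Real.norm_of_nonneg (by positivity)]
    _ ≤ ((m n : ℝ) / x n) ^ k := by
        rw [div_pow]; gcongr
    _ ≤ q ^ k := by gcongr

theorem tendsto_sum_descFactorial_div_pow [l.NeBot] (hx : Tendsto x l atTop)
    (hm : Tendsto (fun n => (m n : ℝ) / x n) l (𝓝 r)) (hr : r < 1) :
    Tendsto (fun n => ∑ k ∈ range (m n + 1), ((m n).descFactorial k : ℝ) / x n ^ k) l
      (𝓝 (1 - r)⁻¹) := by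
  have hr0 : 0 ≤ r := ge_of_tendsto hm <| by
    filter_upwards [hx.eventually_gt_atTop 0] with n hx0
    positivity
  obtain ⟨q, hrq, hq1⟩ := exists_between hr
  have hlim := tendsto_tsum_of_dominated_convergence
    (summable_geometric_of_lt_one (hr0.trans hrq.le) hq1)
    (tendsto_descFactorial_div_pow hx hm) (eventually_descFactorial_div_pow_le hx hm hrq)
  rw [tsum_geometric_of_lt_one hr0 hr] at hlim
  refine hlim.congr fun n => tsum_eq_sum fun k hk => ?_
  have hmk : m n < k := by simpa [Nat.lt_succ_iff] using hk
  rw [descFactorial_eq_zero_iff_lt.mpr hmk, Nat.cast_zero, zero_div]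

end DescFactorialSum

theorem weyl_incGamma_above_general (α t : ℝ) (hα0 : 0 < α) (htα : α < t)
    (m : ℕ → ℕ) (C : ℝ) (hm : ∀ n : ℕ, |(m n : ℝ) - α * n| ≤ C) :
    Tendsto
      (fun n : ℕ =>
        ((Nat.factorial (m n) : ℝ) / ((n : ℝ) * t) ^ (m n)) *
          ∑ j ∈ Finset.range (m n + 1), ((n : ℝ) * t) ^ j / (Nat.factorial j))
      atTop (nhds (t / (t - α))) := by
  have ht : 0 < t := hα0.trans htα
  have hx : Tendsto (fun n : ℕ => (n : ℝ) * t) atTop atTop :=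
    tendsto_natCast_atTop_atTop.atTop_mul_const ht
  have hmx : Tendsto (fun n : ℕ => (m n : ℝ) / (n * t)) atTop (𝓝 (α / t)) := by
    simpa only [div_mul_eq_div_div] using (tendsto_div_natCast_of_abs_sub_mul_le hm).div_const t
  have hlim : (1 - α / t)⁻¹ = t / (t - α) := by
    rw [one_sub_div ht.ne', inv_div]
  rw [← hlim]
  refine (tendsto_sum_descFactorial_div_pow hx hmx ((div_lt_one ht).mpr htα)).congr' ?_
  filter_upwards [eventually_gt_atTop 0] with n hn
  rw [factorial_div_pow_mul_sum_range_pow_div_factorial (by positivity)]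

/-- For `α ∈ (0,1]`, `t > α`, and a sequence `m(n)` with `m(n) - α n` bounded, we have
`(m(n)!/(nt)^{m(n)}) ∑_{j=0}^{m(n)} (nt)^j/j! → t/(t-α)` as `n → ∞`. -/
theorem weyl_incGamma_above (α t : ℝ) (hα0 : 0 < α) (hα1 : α ≤ 1) (htα : α < t)
    (m : ℕ → ℕ) (C : ℝ) (hm : ∀ n : ℕ, |(m n : ℝ) - α * n| ≤ C) :
    Tendsto
      (fun n : ℕ =>
        ((Nat.factorial (m n) : ℝ) / ((n : ℝ) * t) ^ (m n)) *
          ∑ j ∈ Finset.range (m n + 1), ((n : ℝ) * t) ^ j / (Nat.factorial j))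
      atTop (nhds (t / (t - α))) :=
  weyl_incGamma_above_general α t hα0 htα m C hm
end

section
/- Fix \alpha and t with 0 < \alpha \le t. Let m(n) be a sequence of natural numbers such that m(n) - \alpha n is bounded. Then (nt)^{m(n)} / (m(n)! \, e^{nt}) \to 0 as n \to \infty. -/
open Filter Real

/-!
The terms are Poisson probabilities `l ^ k e^{-l} / k!` with `k = m n` and `l = n t`. Since
`l ^ k e^{-l}` is maximal at `l = k`, Stirling's lower bound for `k!` bounds every such term by
`1 / √(2πk)`, which tends to `0` because `m n ≥ α n - C → ∞`.
-/

theorem Real.pow_le_pow_mul_exp_sub (k : ℕ) {l : ℝ} (hl : 0 ≤ l) :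
    l ^ k ≤ (k : ℝ) ^ k * exp (l - k) := by
  rcases Nat.eq_zero_or_pos k with rfl | hk
  · simpa using one_le_exp hl
  have hk' : (0 : ℝ) < k := by exact_mod_cast hk
  have h_ratio : l / k ≤ exp (l / k - 1) := by linarith [add_one_le_exp (l / k - 1)]
  calc l ^ k = (k : ℝ) ^ k * (l / k) ^ k := by rw [div_pow]; field_simp
    _ ≤ (k : ℝ) ^ k * exp (l / k - 1) ^ k := by gcongr
    _ = (k : ℝ) ^ k * exp (l - k) := by
      rw [← exp_nat_mul]; congr 2; field_simp

theorem Real.pow_div_factorial_mul_exp_le {k : ℕ} (hk : k ≠ 0) {l : ℝ} (hl : 0 ≤ l) :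
    l ^ k / (k.factorial * exp l) ≤ 1 / √(2 * π * k) := by
  have hk' : (0 : ℝ) < k := by exact_mod_cast Nat.pos_of_ne_zero hk
  rw [div_le_div_iff₀ (by positivity) (by positivity)]
  calc l ^ k * √(2 * π * k) ≤ (k : ℝ) ^ k * exp (l - k) * √(2 * π * k) := by
        gcongr; exact pow_le_pow_mul_exp_sub k hl
    _ = √(2 * π * k) * (k / exp 1) ^ k * exp l := by
        rw [div_pow, ← exp_nat_mul, mul_one, exp_sub]; field_simp
    _ ≤ k.factorial * exp l := by gcongr; exact Stirling.le_factorial_stirling k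
    _ = 1 * (k.factorial * exp l) := (one_mul _).symm

/-- For `0 < α ≤ t` and a sequence `m(n)` with `m(n) - α n` bounded, we have
`(nt)^{m(n)}/(m(n)! e^{nt}) → 0` as `n → ∞`. -/
theorem weyl_term_small (α t : ℝ) (hα0 : 0 < α) (hαt : α ≤ t)
    (m : ℕ → ℕ) (C : ℝ) (hm : ∀ n : ℕ, |(m n : ℝ) - α * n| ≤ C) :
    Tendsto
      (fun n : ℕ =>
        ((n : ℝ) * t) ^ (m n) / ((Nat.factorial (m n) : ℝ) * Real.exp ((n : ℝ) * t)))
      atTop (nhds 0) := by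
  have ht : 0 ≤ t := hα0.le.trans hαt
  have hm_top : Tendsto (fun n ↦ (m n : ℝ)) atTop atTop := by
    refine tendsto_atTop_mono (fun n ↦ ?_) <| tendsto_atTop_add_const_right _ (-C) <|
      tendsto_natCast_atTop_atTop.const_mul_atTop hα0
    linarith [(abs_le.mp (hm n)).1]
  have h_bound : Tendsto (fun n ↦ 1 / √(2 * π * m n)) atTop (nhds 0) := by
    simpa only [one_div, Function.comp_def] using tendsto_inv_atTop_zero.comp <| tendsto_sqrt_atTop.comp <|
      hm_top.const_mul_atTop (by positivity)
  refine squeeze_zero' (Eventually.of_forall fun n ↦ by positivity) ?_ h_bound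
  filter_upwards [hm_top.eventually_ge_atTop 1] with n hn
  exact pow_div_factorial_mul_exp_le (Nat.one_le_iff_ne_zero.mp (mod_cast hn)) (by positivity)
end

section
/- Let x > 0 be a real number and let n \ge m \ge 0 be integers. With b_k = \sum_{j=1}^k j\,x^j/j! and c_k = \sum_{j=1}^k j^2 x^j/j!, one has c_m b_n \le c_n b_m. -/
open Filter

/-- For `n ≥ m`, `c_m b_n ≤ c_n b_m`. -/
theorem weyl_cb_mono (x : ℝ) (hx : 0 < x) (n m : ℕ) (hnm : m ≤ n) :
    cc m x * bb n x ≤ cc n x * bb m x := by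
  have hIcc : ∀ k : ℕ, Finset.Icc 1 k = Finset.Ioc 0 k := by
    intro k; ext j; simp [Nat.lt_iff_add_one_le]
  have hb : bb n x = bb m x + ∑ k ∈ Finset.Ioc m n, (k : ℝ) * x ^ k / (Nat.factorial k) := by
    rw [bb, bb, hIcc, hIcc, ← Finset.sum_Ioc_consecutive _ (Nat.zero_le m) hnm]
  have hc : cc n x = cc m x + ∑ k ∈ Finset.Ioc m n, (k : ℝ) ^ 2 * x ^ k / (Nat.factorial k) := by
    rw [cc, cc, hIcc, hIcc, ← Finset.sum_Ioc_consecutive _ (Nat.zero_le m) hnm]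
  have key : cc m x * (∑ k ∈ Finset.Ioc m n, (k : ℝ) * x ^ k / (Nat.factorial k))
      ≤ (∑ k ∈ Finset.Ioc m n, (k : ℝ) ^ 2 * x ^ k / (Nat.factorial k)) * bb m x := by
    rw [cc, bb, Finset.sum_mul_sum, Finset.sum_mul_sum, Finset.sum_comm]
    apply Finset.sum_le_sum
    intro j hj
    apply Finset.sum_le_sum
    intro k hk
    simp only [Finset.mem_Icc, Finset.mem_Ioc] at hj hk
    have hkj : (k : ℝ) ≤ (j : ℝ) := by exact_mod_cast le_trans hk.2 (le_of_lt hj.1)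
    have hk1 : (1 : ℝ) ≤ (k : ℝ) := by exact_mod_cast hk.1
    have h1 : (k : ℝ) ^ 2 * (j : ℝ) ≤ (j : ℝ) ^ 2 * (k : ℝ) := by nlinarith [mul_nonneg (mul_nonneg (le_trans zero_le_one hk1) (le_trans zero_le_one (le_trans hk1 hkj))) (sub_nonneg.mpr hkj)]
    calc (k : ℝ) ^ 2 * x ^ k / (Nat.factorial k) * ((j : ℝ) * x ^ j / (Nat.factorial j))
        = ((k : ℝ) ^ 2 * (j : ℝ)) * ((x ^ j / (Nat.factorial j)) * (x ^ k / (Nat.factorial k))) := by ring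
      _ ≤ ((j : ℝ) ^ 2 * (k : ℝ)) * ((x ^ j / (Nat.factorial j)) * (x ^ k / (Nat.factorial k))) := by
          apply mul_le_mul_of_nonneg_right h1; positivity
      _ = (j : ℝ) ^ 2 * x ^ j / (Nat.factorial j) * ((k : ℝ) * x ^ k / (Nat.factorial k)) := by ring
  rw [hb, hc]
  nlinarith [key]
end
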